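/- Let H be a Hilbert space, let (f_k)_{k≥0} be a sequence with f_k ∈ H^{⊗k} satisfying Σ_{k≥0} k!·‖f_k‖² < ∞, let T : H → H be a bounded linear operator and c ∈ H. For k ≥ n define C_{k,n} f_k = ⟨f_k, c^{⊗(k−n)}⟩ ∈ H^{⊗n} (contraction against the (k−n)-fold tensor power of c). Then for each fixed n the series Σ_{k=n}^{∞} binom(k,n)·T^{⊗n}(C_{k,n} f_k) converges in H^{⊗n}. -/

import Mathlib

/-!
The adjoint of the contraction `C_{k,n}` sends `y₁ ⊗ ⋯ ⊗ yₙ` to `y₁ ⊗ ⋯ ⊗ yₙ ⊗ c^{⊗(k-n)}`, which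
multiplies all inner products of elementary tensors by `‖c‖^{2(k-n)}`; since elementary tensors
span a dense subspace, `‖C_{k,n}‖ ≤ ‖c‖^{k-n}`. The `k`-th term of the series therefore has norm at
most `‖T^{⊗n}‖ · C(n+k,n) ‖c‖^k · ‖f_{n+k}‖`, and the weighted inequality
`2ab ≤ a²/(n+k)! + (n+k)! b²` compares this with `Σ (n+k)! ‖f_{n+k}‖² < ∞` and
`Σ C(n+k,n)² ‖c‖^{2k} / (n+k)! ≤ 4^n Σ (4‖c‖²)^k / k! < ∞`.
-/

open scoped RealInnerProductSpace Nat

/-- The tuple `(y₁, …, yₙ, c, …, c)`; `hCon` in `stmt4` is stated with this function unfolded. -/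
def padConst {α : Type*} {n : ℕ} (m : ℕ) (c : α) (y : Fin n → α) : Fin (n + m) → α :=
  fun i => if h : (i : ℕ) < n then y ⟨i, h⟩ else c

theorem prod_inner_padConst {H : Type*} [NormedAddCommGroup H] [InnerProductSpace ℝ H]
    {n : ℕ} (m : ℕ) (c : H) (y y' : Fin n → H) :
    ∏ i, ⟪padConst m c y i, padConst m c y' i⟫ = (‖c‖ ^ m) ^ 2 * ∏ i, ⟪y i, y' i⟫ := by
  simp [Fin.prod_univ_add, padConst, ← pow_mul, mul_comm]

section InnerProduct

variable {ι E F : Type*} [NormedAddCommGroup E] [InnerProductSpace ℝ E]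
  [NormedAddCommGroup F] [InnerProductSpace ℝ F]

theorem norm_finsupp_sum_smul_eq_mul {e : ι → E} {g : ι → F} {r : ℝ} (hr : 0 ≤ r)
    (hg : ∀ i j, ⟪g i, g j⟫ = r ^ 2 * ⟪e i, e j⟫) (a : ι →₀ ℝ) :
    ‖a.sum fun i t => t • g i‖ = r * ‖a.sum fun i t => t • e i‖ := by
  refine (sq_eq_sq₀ (norm_nonneg _) (by positivity)).1 ?_
  simp only [← real_inner_self_eq_norm_sq, mul_pow, Finsupp.sum_inner, Finsupp.inner_sum,
    real_inner_smul_left, real_inner_smul_right, hg, Finsupp.mul_sum]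
  exact Finsupp.sum_congr fun i _ => Finsupp.sum_congr fun j _ => by ring

theorem norm_le_of_inner_eq_of_dense_span {e : ι → E} {g : ι → F} {r : ℝ} (hr : 0 ≤ r)
    (he : Dense (Submodule.span ℝ (Set.range e) : Set E))
    (hg : ∀ i j, ⟪g i, g j⟫ = r ^ 2 * ⟪e i, e j⟫) {x : F} {y : E}
    (hxy : ∀ i, ⟪y, e i⟫ = ⟪x, g i⟫) : ‖y‖ ≤ r * ‖x‖ := by
  have hbound : ∀ z, |⟪y, z⟫| ≤ r * ‖x‖ * ‖z‖ := by
    refine he.induction (fun z hz => ?_) (isClosed_le (by fun_prop) (by fun_prop))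
    obtain ⟨a, rfl⟩ := Finsupp.mem_span_range_iff_exists_finsupp.1 hz
    have hinner : ⟪y, a.sum fun i t => t • e i⟫ = ⟪x, a.sum fun i t => t • g i⟫ := by
      simp only [Finsupp.inner_sum, real_inner_smul_right, hxy]
    calc |⟪y, a.sum fun i t => t • e i⟫| = |⟪x, a.sum fun i t => t • g i⟫| := by rw [hinner]
      _ ≤ ‖x‖ * ‖a.sum fun i t => t • g i‖ := abs_real_inner_le_norm _ _
      _ = r * ‖x‖ * ‖a.sum fun i t => t • e i‖ := by
        rw [norm_finsupp_sum_smul_eq_mul hr hg]; ring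
  have hy := hbound y
  rw [real_inner_self_eq_norm_sq, abs_of_nonneg (by positivity), sq] at hy
  rcases (norm_nonneg y).eq_or_lt with h0 | hpos
  · rw [← h0]; positivity
  · exact le_of_mul_le_mul_right hy hpos

end InnerProduct

theorem summable_mul_of_summable_sq_div {ι : Type*} {a b w : ι → ℝ} (hw : ∀ i, 0 < w i)
    (ha : Summable fun i => a i ^ 2 / w i) (hb : Summable fun i => w i * b i ^ 2) :
    Summable fun i => a i * b i := by
  refine ((ha.add hb).div_const 2).of_norm_bounded fun i => ?_
  have hwi := hw i
  rw [Real.norm_eq_abs, abs_mul, le_div_iff₀ two_pos, div_add' _ _ _ hwi.ne', le_div_iff₀ hwi]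
  have h := sq_nonneg (|a i| - w i * |b i|)
  rw [sub_sq, mul_pow, sq_abs, sq_abs] at h
  linarith

theorem summable_choose_mul_pow_sq_div_factorial (n : ℕ) (x : ℝ) :
    Summable fun k => ((n + k).choose n * x ^ k) ^ 2 / (n + k)! := by
  refine ((Real.summable_pow_div_factorial (4 * x ^ 2)).mul_left (4 ^ n)).of_nonneg_of_le
    (fun k => by positivity) fun k => ?_
  have hchoose : ((n + k).choose n : ℝ) ^ 2 ≤ 4 ^ n * 4 ^ k := by
    rw [← pow_add, show (4 : ℝ) = 2 ^ 2 by norm_num, ← pow_mul, mul_comm, pow_mul]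
    gcongr
    exact_mod_cast Nat.choose_le_two_pow _ _
  have hfact : (k ! : ℝ) ≤ (n + k)! := by exact_mod_cast Nat.factorial_le (Nat.le_add_left k n)
  calc ((n + k).choose n * x ^ k) ^ 2 / (n + k)! ≤ 4 ^ n * 4 ^ k * (x ^ 2) ^ k / k ! := by
        rw [mul_pow, ← pow_mul, mul_comm k 2, pow_mul]
        gcongr
    _ = 4 ^ n * ((4 * x ^ 2) ^ k / k !) := by ring

/-- The tensor powers `H^{⊗k}` are modelled as Hilbert spaces `Hpow k` with elementary tensors
`mk k`, and `Con k n` is the contraction against `c^{⊗(k-n)}`, characterized by its pairing with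
elementary tensors. -/
theorem stmt4_general {H : Type*} [NormedAddCommGroup H] [InnerProductSpace ℝ H]
    (Hpow : ℕ → Type*) [∀ k, NormedAddCommGroup (Hpow k)]
    [∀ k, InnerProductSpace ℝ (Hpow k)] [∀ k, CompleteSpace (Hpow k)]
    (mk : ∀ k, (Fin k → H) → Hpow k)
    (hmk_inner : ∀ k (x y : Fin k → H), ⟪mk k x, mk k y⟫ = ∏ i, ⟪x i, y i⟫)
    (hmk_dense : ∀ k, Dense ((Submodule.span ℝ (Set.range (mk k)) : Submodule ℝ (Hpow k)) : Set (Hpow k)))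
    (Tpow : ∀ n, Hpow n →L[ℝ] Hpow n)
    (c : H)
    (Con : ∀ k n, Hpow k →ₗ[ℝ] Hpow n)
    (hCon : ∀ k n, n ≤ k → ∀ (x : Hpow k) (y : Fin n → H),
      ⟪Con k n x, mk n y⟫ =
        ⟪x, mk k (fun i => if h : (i : ℕ) < n then y ⟨i, h⟩ else c)⟫)
    (f : ∀ k, Hpow k)
    (hf : Summable (fun k : ℕ => (k.factorial : ℝ) * ‖f k‖ ^ 2))
    (n : ℕ) :
    Summable (fun k : ℕ =>
      (((n + k).choose n : ℝ)) • Tpow n (Con (n + k) n (f (n + k)))) := by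
  have hCon_norm : ∀ k (x : Hpow (n + k)), ‖Con (n + k) n x‖ ≤ ‖c‖ ^ k * ‖x‖ := fun k x =>
    norm_le_of_inner_eq_of_dense_span (by positivity) (hmk_dense n)
      (fun y y' => by rw [hmk_inner, hmk_inner]; exact prod_inner_padConst k c y y')
      (hCon (n + k) n (Nat.le_add_right n k) x)
  have hscalar : Summable fun k => ((n + k).choose n * ‖c‖ ^ k) * ‖f (n + k)‖ :=
    summable_mul_of_summable_sq_div (fun k => by positivity)
      (summable_choose_mul_pow_sq_div_factorial n ‖c‖)
      (hf.comp_injective (add_right_injective n))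
  refine (hscalar.mul_left ‖Tpow n‖).of_norm_bounded fun k => ?_
  calc ‖((n + k).choose n : ℝ) • Tpow n (Con (n + k) n (f (n + k)))‖
      ≤ (n + k).choose n * (‖Tpow n‖ * ‖Con (n + k) n (f (n + k))‖) := by
        rw [norm_smul, Real.norm_natCast]
        gcongr
        exact (Tpow n).le_opNorm _
    _ ≤ (n + k).choose n * (‖Tpow n‖ * (‖c‖ ^ k * ‖f (n + k)‖)) := by gcongr; exact hCon_norm k _
    _ = ‖Tpow n‖ * ((n + k).choose n * ‖c‖ ^ k * ‖f (n + k)‖) := by ring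

/-- Convergence of the series `Σ_{k≥n} C(k,n) T^{⊗n}(⟨f_k, c^{⊗(k-n)}⟩)` in `H^{⊗n}`,
for a chaos-coefficient sequence with `Σ_k k!·‖f_k‖² < ∞`. The Hilbert tensor powers
`H^{⊗k}` are axiomatized as Hilbert spaces `Hpow k` with elementary tensors `mk`,
`T^{⊗n}` acts slot-wise on elementary tensors, and the contraction `Con k n f = ⟨f, c^{⊗(k-n)}⟩`
is characterized by `⟪Con k n f, y₁ ⊗ ⋯ ⊗ yₙ⟫ = ⟪f, y₁ ⊗ ⋯ ⊗ yₙ ⊗ c ⊗ ⋯ ⊗ c⟫`. -/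
theorem stmt4 {H : Type*} [NormedAddCommGroup H] [InnerProductSpace ℝ H] [CompleteSpace H]
    (Hpow : ℕ → Type*) [∀ k, NormedAddCommGroup (Hpow k)]
    [∀ k, InnerProductSpace ℝ (Hpow k)] [∀ k, CompleteSpace (Hpow k)]
    (mk : ∀ k, (Fin k → H) → Hpow k)
    (hmk_inner : ∀ k (x y : Fin k → H), ⟪mk k x, mk k y⟫ = ∏ i, ⟪x i, y i⟫)
    (hmk_dense : ∀ k, Dense ((Submodule.span ℝ (Set.range (mk k)) : Submodule ℝ (Hpow k)) : Set (Hpow k)))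
    (T : H →L[ℝ] H)
    (Tpow : ∀ n, Hpow n →L[ℝ] Hpow n)
    (hTpow : ∀ n (x : Fin n → H), Tpow n (mk n x) = mk n (fun i => T (x i)))
    (c : H)
    (Con : ∀ k n, Hpow k →ₗ[ℝ] Hpow n)
    (hCon : ∀ k n, n ≤ k → ∀ (x : Hpow k) (y : Fin n → H),
      ⟪Con k n x, mk n y⟫ =
        ⟪x, mk k (fun i => if h : (i : ℕ) < n then y ⟨i, h⟩ else c)⟫)
    (f : ∀ k, Hpow k)
    (hf : Summable (fun k : ℕ => (k.factorial : ℝ) * ‖f k‖ ^ 2))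
    (n : ℕ) :
    Summable (fun k : ℕ =>
      (((n + k).choose n : ℝ)) • Tpow n (Con (n + k) n (f (n + k)))) :=
  stmt4_general Hpow mk hmk_inner hmk_dense Tpow c Con hCon f hf n
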